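/- arXiv:2302.11045 — 3 statements merged into one kernel-verified Lean document; each statement's English description precedes it below -/
import Mathlib

section
/- For σ = Re(s) > 1 and any positive integers q, d with d | q, the Dirichlet series ∑_{n ≥ 1, gcd(n,q) = d} d_2(n)/n^s equals (ζ(s)²/d^s) · ∑ over triples (r,h,H) with r·h | q, r | d, H | q/d of μ(h)·μ(H)/(h·H)^s. -/
/-!
Since `gcd (a * b) q = gcd a q * gcd b (q / gcd a q)`, a factorisation `n = a * b` satisfies
`gcd n q = d` exactly when `gcd a q = r` and `gcd b (q / r) = d / r` for a (necessarily unique)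
divisor `r` of `d`. As `d₂ = 1 ⋆ 1`, the Dirichlet series on the left is therefore a sum over
`r ∣ d` of products of two series `∑_{gcd(n, N) = e} n^{-s}`. Substituting `n = e m`, such a series
is `e^{-s} ∑_{gcd(m, N/e) = 1} m^{-s}`, and Möbius inversion of the coprimality condition
gives `∑_{gcd(m, M) = 1} m^{-s} = ζ(s) ∑_{h ∣ M} μ(h) h^{-s}`.
-/

open scoped BigOperators

/-- The `k`-fold divisor function, as the `k`-th Dirichlet-convolution power of `ζ`. -/
def dk (k : ℕ) : ArithmeticFunction ℕ := (ArithmeticFunction.zeta) ^ k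

open ArithmeticFunction LSeries
open scoped LSeries.notation ArithmeticFunction.Moebius

lemma Nat.gcd_mul_eq_mul_gcd_div (a b q : ℕ) :
    (a * b).gcd q = a.gcd q * b.gcd (q / a.gcd q) := by
  rcases Nat.eq_zero_or_pos (a.gcd q) with h | h
  · obtain ⟨rfl, rfl⟩ := Nat.gcd_eq_zero_iff.mp h
    simp
  set r := a.gcd q
  calc (a * b).gcd q = (r * (a / r) * b).gcd (r * (q / r)) := by
        rw [Nat.mul_div_cancel' (Nat.gcd_dvd_left a q),
          Nat.mul_div_cancel' (Nat.gcd_dvd_right a q)]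
    _ = r * b.gcd (q / r) := by
        rw [mul_assoc, Nat.gcd_mul_left, (Nat.coprime_div_gcd_div_gcd h).gcd_mul_left_cancel]

noncomputable def gcdIndicator (N e n : ℕ) : ℂ := if n.gcd N = e then 1 else 0

lemma sum_divisors_gcdIndicator_mul {d : ℕ} (hd : d ≠ 0) (q a b : ℕ) :
    ∑ r ∈ d.divisors, gcdIndicator q r a * gcdIndicator (q / r) (d / r) b =
      gcdIndicator q d (a * b) := by
  have hterm : ∀ r, gcdIndicator q r a * gcdIndicator (q / r) (d / r) b =
      if a.gcd q = r then gcdIndicator (q / r) (d / r) b else 0 := fun r => by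
    unfold gcdIndicator; split_ifs <;> simp
  rw [Finset.sum_congr rfl fun r _ => hterm r, Finset.sum_ite_eq]
  simp only [gcdIndicator, Nat.gcd_mul_eq_mul_gcd_div a b q, Nat.mem_divisors, ne_eq, hd,
    not_false_eq_true, and_true]
  set r := a.gcd q
  by_cases hr : r ∣ d
  · have hr0 : r ≠ 0 := fun h => hd (Nat.eq_zero_of_zero_dvd (h ▸ hr))
    simp only [hr, if_true, Nat.eq_div_iff_mul_eq_left hr0 hr, eq_comm (a := d), mul_comm r]
  · have : r * b.gcd (q / r) ≠ d := fun h => hr (h ▸ dvd_mul_right _ _)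
    simp [hr, this]

lemma dk_two_apply (n : ℕ) : dk 2 n = n.divisorsAntidiagonal.card := by
  rw [dk, sq, mul_apply, Finset.card_eq_sum_ones]
  refine Finset.sum_congr rfl fun p hp => ?_
  obtain ⟨h1, h2⟩ := Nat.ne_zero_of_mem_divisorsAntidiagonal hp
  simp [h1, h2]

lemma gcdIndicator_mul_dk_two_eq_sum_convolution {d : ℕ} (hd : d ≠ 0) (q : ℕ) :
    (fun n => gcdIndicator q d n * dk 2 n) =
      ∑ r ∈ d.divisors, gcdIndicator q r ⍟ gcdIndicator (q / r) (d / r) := by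
  ext n
  simp only [Finset.sum_apply, convolution_def]
  rw [Finset.sum_comm, dk_two_apply, Finset.card_eq_sum_ones, Nat.cast_sum, Finset.mul_sum]
  refine Finset.sum_congr rfl fun p hp => ?_
  rw [sum_divisors_gcdIndicator_mul hd, (Nat.mem_divisorsAntidiagonal.mp hp).1, Nat.cast_one,
    mul_one]

lemma LSeriesSummable_gcdIndicator {s : ℂ} (hs : 1 < s.re) (N e : ℕ) :
    LSeriesSummable (gcdIndicator N e) s :=
  LSeriesSummable_of_bounded_of_one_lt_re (m := 1)
    (fun n _ => by unfold gcdIndicator; split_ifs <;> simp) hs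

lemma LSeries_ite_dvd_div {e : ℕ} (he : e ≠ 0) (f : ℕ → ℂ) (s : ℂ) :
    LSeries (fun n => if e ∣ n then f (n / e) else 0) s = ((e : ℂ) ^ s)⁻¹ * LSeries f s := by
  have hsupp : Function.support (term (fun n => if e ∣ n then f (n / e) else 0) s) ⊆
      Set.range (e * ·) := by
    intro n hn
    obtain ⟨m, rfl⟩ : e ∣ n := by
      by_contra h
      simp [term_def, h] at hn
    exact ⟨m, rfl⟩
  rw [LSeries, LSeries, ← tsum_mul_left, ← (mul_right_injective₀ he).tsum_eq hsupp]
  refine tsum_congr fun m => ?_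
  rcases eq_or_ne m 0 with rfl | hm
  · simp
  rw [term_of_ne_zero (mul_ne_zero he hm), term_of_ne_zero hm, if_pos (dvd_mul_right e m),
    Nat.mul_div_cancel_left m (Nat.pos_of_ne_zero he), Nat.cast_mul,
    Complex.natCast_mul_natCast_cpow]
  ring

lemma gcdIndicator_eq_ite_dvd {N e : ℕ} (hN : N ≠ 0) (he : e ∣ N) :
    gcdIndicator N e = fun n => if e ∣ n then gcdIndicator (N / e) 1 (n / e) else 0 := by
  ext n
  have he0 : 0 < e := Nat.pos_of_dvd_of_pos he (Nat.pos_of_ne_zero hN)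
  by_cases hen : e ∣ n
  · have hgcd : e ∣ n.gcd N := Nat.dvd_gcd hen he
    simp only [gcdIndicator, hen, if_true, Nat.gcd_div hen he,
      Nat.div_eq_iff_eq_mul_left he0 hgcd, one_mul]
  · have : n.gcd N ≠ e := fun h => hen (h ▸ Nat.gcd_dvd_left n N)
    simp [gcdIndicator, hen, this]

lemma sum_divisors_moebius {R : Type*} [Ring R] (n : ℕ) :
    ∑ h ∈ n.divisors, (μ h : R) = if n = 1 then 1 else 0 := by
  rw [← one_apply, ← coe_moebius_mul_coe_zeta, coe_mul_zeta_apply]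
  simp only [intCoe_apply]

lemma gcdIndicator_one_eq_convolution {N n : ℕ} (hn : n ≠ 0) :
    gcdIndicator N 1 n = ((fun h => if h ∣ N then (μ h : ℂ) else 0) ⍟ 1) n := by
  simp only [convolution_def, Pi.one_apply, mul_one]
  rw [Nat.sum_divisorsAntidiagonal (fun a _ => if a ∣ N then (μ a : ℂ) else 0),
    ← Finset.sum_filter]
  have hfilter : n.divisors.filter (· ∣ N) = (n.gcd N).divisors := by
    ext h
    simp only [Finset.mem_filter, Nat.mem_divisors, Nat.dvd_gcd_iff, ne_eq, Nat.gcd_eq_zero_iff,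
      hn, false_and, not_false_eq_true, and_true]
  rw [hfilter, sum_divisors_moebius, gcdIndicator]

lemma LSeries_gcdIndicator_one {N : ℕ} (hN : N ≠ 0) {s : ℂ} (hs : 1 < s.re) :
    LSeries (gcdIndicator N 1) s = riemannZeta s * ∑ h ∈ N.divisors, (μ h : ℂ) / (h : ℂ) ^ s := by
  set m : ℕ → ℂ := fun h => if h ∣ N then (μ h : ℂ) else 0
  have hvanish : ∀ h ∉ N.divisors, term m s h = 0 := fun h hh => by
    have : ¬ h ∣ N := fun hdvd => hh (Nat.mem_divisors.mpr ⟨hdvd, hN⟩)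
    simp [term_def, m, this]
  have hm : LSeriesSummable m s := summable_of_ne_finset_zero hvanish
  rw [LSeries_congr (fun hn => gcdIndicator_one_eq_convolution hn),
    LSeries_convolution' hm (LSeriesSummable_one_iff.mpr hs), LSeries_one_eq_riemannZeta hs,
    mul_comm, LSeries, tsum_eq_sum hvanish]
  refine congrArg _ (Finset.sum_congr rfl fun h hh => ?_)
  rw [term_of_ne_zero (Nat.ne_of_gt (Nat.pos_of_mem_divisors hh))]
  simp only [m, if_pos (Nat.dvd_of_mem_divisors hh)]

lemma LSeries_gcdIndicator {N e : ℕ} (hN : N ≠ 0) (he : e ∣ N) {s : ℂ} (hs : 1 < s.re) :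
    LSeries (gcdIndicator N e) s =
      riemannZeta s / (e : ℂ) ^ s * ∑ h ∈ (N / e).divisors, (μ h : ℂ) / (h : ℂ) ^ s := by
  have he0 : e ≠ 0 := ne_zero_of_dvd_ne_zero hN he
  rw [gcdIndicator_eq_ite_dvd hN he, LSeries_ite_dvd_div he0,
    LSeries_gcdIndicator_one ((Nat.div_ne_zero_iff_of_dvd he).mpr ⟨hN, he0⟩) hs]
  ring

lemma tsum_ite_dvd_eq_sum_divisors {α : Type*} [AddCommMonoid α] [TopologicalSpace α] {N : ℕ}
    (hN : N ≠ 0) (f : ℕ → α) :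
    ∑' h, (if h ∣ N then f h else 0) = ∑ h ∈ N.divisors, f h := by
  rw [tsum_eq_sum fun h hh => if_neg fun hdvd => hh (Nat.mem_divisors.mpr ⟨hdvd, hN⟩)]
  exact Finset.sum_congr rfl fun h hh => if_pos (Nat.dvd_of_mem_divisors hh)

lemma tsum_triple_moebius_eq_sum_divisors {q d : ℕ} (hq : q ≠ 0) (hd : d ∣ q) (s : ℂ) :
    ∑' r : ℕ, ∑' h : ℕ, ∑' H : ℕ,
        (if r * h ∣ q ∧ r ∣ d ∧ H ∣ q / d then
          (μ h : ℂ) * (μ H : ℂ) / ((h * H : ℕ) : ℂ) ^ s else 0) =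
      ∑ r ∈ d.divisors, (∑ h ∈ (q / r).divisors, (μ h : ℂ) / (h : ℂ) ^ s) *
        ∑ H ∈ (q / d).divisors, (μ H : ℂ) / (H : ℂ) ^ s := by
  have hd0 : d ≠ 0 := fun h => hq (Nat.eq_zero_of_zero_dvd (h ▸ hd))
  rw [← tsum_ite_dvd_eq_sum_divisors hd0]
  refine tsum_congr fun r => ?_
  by_cases hrd : r ∣ d
  · have hrq : r ∣ q := hrd.trans hd
    have hqr : q / r ≠ 0 :=
      (Nat.div_ne_zero_iff_of_dvd hrq).mpr ⟨hq, ne_zero_of_dvd_ne_zero hd0 hrd⟩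
    have hqd : q / d ≠ 0 := (Nat.div_ne_zero_iff_of_dvd hd).mpr ⟨hq, hd0⟩
    rw [if_pos hrd, ← tsum_ite_dvd_eq_sum_divisors hqr, ← tsum_ite_dvd_eq_sum_divisors hqd,
      ← tsum_mul_right]
    refine tsum_congr fun h => ?_
    rw [← tsum_mul_left]
    refine tsum_congr fun H => ?_
    simp only [Nat.dvd_div_iff_mul_dvd hrq, hrd, true_and, ite_and, ite_mul, zero_mul, mul_ite,
      mul_zero]
    by_cases hh : r * h ∣ q <;> by_cases hH : H ∣ q / d <;>
      simp [hh, hH, Nat.cast_mul, Complex.natCast_mul_natCast_cpow, div_mul_div_comm]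
  · simp [hrd]

lemma LSeries_gcdIndicator_convolution {q d r : ℕ} (hq : q ≠ 0) (hd : d ∣ q) (hr : r ∣ d)
    {s : ℂ} (hs : 1 < s.re) :
    LSeries (gcdIndicator q r ⍟ gcdIndicator (q / r) (d / r)) s =
      riemannZeta s ^ 2 / (d : ℂ) ^ s * ((∑ h ∈ (q / r).divisors, (μ h : ℂ) / (h : ℂ) ^ s) *
        ∑ H ∈ (q / d).divisors, (μ H : ℂ) / (H : ℂ) ^ s) := by
  have hrq := hr.trans hd
  have hr0 : r ≠ 0 := ne_zero_of_dvd_ne_zero (ne_zero_of_dvd_ne_zero hq hd) hr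
  have hqr : q / r / (d / r) = q / d := by rw [Nat.div_div_eq_div_mul, Nat.mul_div_cancel' hr]
  have hcpow : (d : ℂ) ^ s = (r : ℂ) ^ s * ((d / r : ℕ) : ℂ) ^ s := by
    rw [← Complex.natCast_mul_natCast_cpow, ← Nat.cast_mul, Nat.mul_div_cancel' hr]
  rw [LSeries_convolution' (LSeriesSummable_gcdIndicator hs _ _)
      (LSeriesSummable_gcdIndicator hs _ _),
    LSeries_gcdIndicator hq hrq hs,
    LSeries_gcdIndicator ((Nat.div_ne_zero_iff_of_dvd hrq).mpr ⟨hq, hr0⟩)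
      (Nat.div_dvd_div hr hd) hs, hqr, hcpow]
  ring

lemma LSeries_gcdIndicator_mul_dk_two (q d : ℕ) (s : ℂ) :
    LSeries (fun n => gcdIndicator q d n * dk 2 n) s =
      ∑' n : ℕ, if n.gcd q = d then (dk 2 n : ℂ) / (n : ℂ) ^ s else 0 := by
  refine tsum_congr fun n => ?_
  rcases eq_or_ne n 0 with rfl | hn
  · simp [dk_two_apply]
  · rw [term_of_ne_zero hn, gcdIndicator]
    split_ifs <;> simp

theorem stmt1_general (s : ℂ) (hs : 1 < s.re) (q d : ℕ) (hq : 0 < q) (hd : d ∣ q) :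
    (∑' n : ℕ, if Nat.gcd n q = d then (dk 2 n : ℂ) / (n : ℂ) ^ s else 0)
      = riemannZeta s ^ 2 / (d : ℂ) ^ s *
        ∑' r : ℕ, ∑' h : ℕ, ∑' H : ℕ,
          (if r * h ∣ q ∧ r ∣ d ∧ H ∣ q / d then
            ((ArithmeticFunction.moebius h : ℤ) : ℂ) * ((ArithmeticFunction.moebius H : ℤ) : ℂ)
              / ((h * H : ℕ) : ℂ) ^ s
          else 0) := by
  have hd0 : d ≠ 0 := ne_zero_of_dvd_ne_zero hq.ne' hd
  rw [← LSeries_gcdIndicator_mul_dk_two, gcdIndicator_mul_dk_two_eq_sum_convolution hd0,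
    LSeries_sum fun r _ => (LSeriesSummable_gcdIndicator hs _ _).convolution
      (LSeriesSummable_gcdIndicator hs _ _), tsum_triple_moebius_eq_sum_divisors hq.ne' hd, Finset.mul_sum]
  exact Finset.sum_congr rfl fun r hr =>
    LSeries_gcdIndicator_convolution hq.ne' hd (Nat.dvd_of_mem_divisors hr) hs

theorem stmt1 (s : ℂ) (hs : 1 < s.re) (q d : ℕ) (hq : 0 < q) (hd0 : 0 < d) (hd : d ∣ q) :
    (∑' n : ℕ, if Nat.gcd n q = d then (dk 2 n : ℂ) / (n : ℂ) ^ s else 0)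
      = riemannZeta s ^ 2 / (d : ℂ) ^ s *
        ∑' r : ℕ, ∑' h : ℕ, ∑' H : ℕ,
          (if r * h ∣ q ∧ r ∣ d ∧ H ∣ q / d then
            ((ArithmeticFunction.moebius h : ℤ) : ℂ) * ((ArithmeticFunction.moebius H : ℤ) : ℂ)
              / ((h * H : ℕ) : ℂ) ^ s
          else 0) :=
  stmt1_general s hs q d hq hd
end

section
/- For every k ≥ 1, every prime p, and all integers N ≥ k and D ≥ 1, the Dirichlet convolution of n ↦ d_k(p^D · n) with Popovici's function μ^k vanishes at p^N; that is, ∑_{ab = p^N} d_k(p^D · a) · μ^k(b) = 0. -/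
open scoped BigOperators

/-- Popovici's function `μ^k`: the `k`-fold Dirichlet-convolution power of the Möbius function. -/
def mupow (k : ℕ) : ArithmeticFunction ℤ := (ArithmeticFunction.moebius) ^ k

/-!
Since `d_k ⋆ μ^k = (ζ ⋆ μ)^k = 1`, the values of `d_k ⋆ μ^k` at `p^(N + D)` vanish. On the other
hand `μ^k(p^j) = 0` for `j > k`, so in `∑_{i + j = N + D} d_k(p^i) μ^k(p^j)` only the terms with
`j ≤ N` survive, i.e. `i = D + i'` with `i' + j = N`, and these are exactly the terms of the sum
in question.
-/

open ArithmeticFunction Finset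

namespace Nat

theorem sum_divisorsAntidiagonal_prime_pow {M : Type*} [AddCommMonoid M] {p : ℕ} (hp : p.Prime)
    (f : ℕ → ℕ → M) (n : ℕ) :
    ∑ x ∈ (p ^ n).divisorsAntidiagonal, f x.1 x.2 =
      ∑ i ∈ range (n + 1), f (p ^ i) (p ^ (n - i)) := by
  rw [sum_divisorsAntidiagonal f, sum_divisors_prime_pow hp]
  refine sum_congr rfl fun i hi => ?_
  rw [Nat.pow_div (by simpa [Nat.lt_succ_iff] using hi) hp.pos]

end Nat

namespace ArithmeticFunction

variable {R : Type*} [Semiring R] {p : ℕ}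

theorem mul_apply_prime_pow_eq_zero (hp : p.Prime) {f g : ArithmeticFunction R} {a b : ℕ}
    (hf : ∀ j, a < j → f (p ^ j) = 0) (hg : ∀ j, b < j → g (p ^ j) = 0) {j : ℕ} (hj : a + b < j) :
    (f * g) (p ^ j) = 0 := by
  rw [mul_apply, Nat.sum_divisorsAntidiagonal_prime_pow hp (fun x y => f x * g y)]
  refine sum_eq_zero fun i _ => ?_
  rcases lt_or_ge a i with hi' | hi'
  · rw [hf i hi', zero_mul]
  · rw [hg (j - i) (by omega), mul_zero]

theorem pow_apply_prime_pow_eq_zero (hp : p.Prime) {f : ArithmeticFunction R} {a : ℕ}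
    (hf : ∀ j, a < j → f (p ^ j) = 0) (k : ℕ) {j : ℕ} (hj : k * a < j) : (f ^ k) (p ^ j) = 0 := by
  induction k generalizing j with
  | zero => exact one_apply_ne (Nat.one_lt_pow (by omega) hp.one_lt).ne'
  | succ k ih =>
    rw [pow_succ]
    exact mul_apply_prime_pow_eq_zero hp (fun _ => ih) hf (by rwa [Nat.succ_mul] at hj)

theorem mul_apply_prime_pow_add (hp : p.Prime) (f g : ArithmeticFunction R) {N : ℕ}
    (hg : ∀ j, N < j → g (p ^ j) = 0) (D : ℕ) :
    (f * g) (p ^ (N + D)) = ∑ x ∈ (p ^ N).divisorsAntidiagonal, f (p ^ D * x.1) * g x.2 := by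
  rw [mul_apply, Nat.sum_divisorsAntidiagonal_prime_pow hp (fun x y => f x * g y),
    Nat.sum_divisorsAntidiagonal_prime_pow hp (fun x y => f (p ^ D * x) * g y),
    show N + D + 1 = D + (N + 1) by omega, sum_range_add]
  have hlow : ∑ i ∈ range D, f (p ^ i) * g (p ^ (N + D - i)) = 0 :=
    sum_eq_zero fun i hi => by rw [hg _ (by have := mem_range.1 hi; omega), mul_zero]
  rw [hlow, zero_add]
  refine sum_congr rfl fun i _ => ?_
  rw [← pow_add, show N + D - (D + i) = N - i by omega]

theorem natCoe_pow (f : ArithmeticFunction ℕ) (k : ℕ) :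
    (↑(f ^ k) : ArithmeticFunction R) = (f : ArithmeticFunction R) ^ k := by
  induction k with
  | zero => simp
  | succ k ih => rw [pow_succ, pow_succ, natCoe_mul, ih]

end ArithmeticFunction

theorem mupow_apply_prime_pow_eq_zero (k : ℕ) {p : ℕ} (hp : p.Prime) {j : ℕ} (hj : k < j) :
    mupow k (p ^ j) = 0 := by
  refine pow_apply_prime_pow_eq_zero hp (a := 1) (fun j hj => ?_) k (by rwa [mul_one])
  rw [moebius_apply_prime_pow hp (by omega), if_neg (by omega)]

theorem natCoe_dk_mul_mupow (k : ℕ) : (dk k : ArithmeticFunction ℤ) * mupow k = 1 := by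
  rw [dk, mupow, natCoe_pow, ← mul_pow, coe_zeta_mul_moebius, one_pow]

theorem stmt3_general (k : ℕ) (p : ℕ) (hp : p.Prime) (N D : ℕ) (hN : k ≤ N)
    (hD : 1 ≤ D) :
    ∑ x ∈ (p ^ N).divisorsAntidiagonal, (dk k (p ^ D * x.1) : ℤ) * mupow k x.2 = 0 := by
  have hμ : ∀ j, N < j → mupow k (p ^ j) = 0 := fun j hj =>
    mupow_apply_prime_pow_eq_zero k hp (by omega)
  simp_rw [← natCoe_apply]
  rw [← mul_apply_prime_pow_add hp _ _ hμ, natCoe_dk_mul_mupow]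
  exact one_apply_ne (Nat.one_lt_pow (by omega) hp.one_lt).ne'

theorem stmt3 (k : ℕ) (hk : 1 ≤ k) (p : ℕ) (hp : p.Prime) (N D : ℕ) (hN : k ≤ N)
    (hD : 1 ≤ D) :
    ∑ x ∈ (p ^ N).divisorsAntidiagonal, (dk k (p ^ D * x.1) : ℤ) * mupow k x.2 = 0 :=
  stmt3_general k p hp N D hN hD
end

section
/- The function F_δ = (n ↦ d_k(δn)) ⋆ μ^k is 'multiplicative in δ and n jointly': if D_1,…,D_r and N_1,…,N_r are prime powers of distinct primes p_1,…,p_r (allowing exponent 0), then F_{D_1⋯D_r}(N_1⋯N_r) = F_{D_1}(N_1)⋯F_{D_r}(N_r). -/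
open scoped BigOperators

/-- `F_δ = (n ↦ d_k(δn)) ⋆ μ^k`. -/
def Fdelta (k δ : ℕ) (n : ℕ) : ℤ :=
  ∑ x ∈ n.divisorsAntidiagonal, (dk k (δ * x.1) : ℤ) * mupow k x.2

/-! Since `d_k` and `μ^k` are multiplicative, when `δ₁n₁` and `δ₂n₂` are coprime the divisor pairs
`(a, b)` of `n₁n₂` are exactly the products `(a₁a₂, b₁b₂)` of divisor pairs of `n₁` and `n₂`, and
the summand `d_k(δ₁δ₂a₁a₂) μ^k(b₁b₂)` splits as `d_k(δ₁a₁) μ^k(b₁) · d_k(δ₂a₂) μ^k(b₂)`.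
Prime powers of distinct primes are pairwise coprime, so the factorization iterates. -/

open Finset ArithmeticFunction Function
open scoped Pointwise

theorem Nat.Coprime.sum_divisorsAntidiagonal_mul {M : Type*} [AddCommMonoid M] {m n : ℕ}
    (hmn : m.Coprime n) (f : ℕ → ℕ → M) :
    ∑ x ∈ (m * n).divisorsAntidiagonal, f x.1 x.2 =
      ∑ x ∈ m.divisorsAntidiagonal, ∑ y ∈ n.divisorsAntidiagonal, f (x.1 * y.1) (x.2 * y.2) := by
  rw [Nat.sum_divisorsAntidiagonal f, Nat.divisors_mul, Finset.mul_def,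
    sum_image hmn.mul_injOn_divisors, sum_product,
    Nat.sum_divisorsAntidiagonal fun a b ↦ ∑ y ∈ n.divisorsAntidiagonal, f (a * y.1) (b * y.2)]
  refine sum_congr rfl fun a ha ↦ ?_
  rw [Nat.sum_divisorsAntidiagonal fun b c ↦ f (a * b) (m / a * c)]
  refine sum_congr rfl fun b hb ↦ ?_
  rw [Nat.div_mul_div_comm (Nat.dvd_of_mem_divisors ha) (Nat.dvd_of_mem_divisors hb)]

theorem Fdelta_mul (k : ℕ) {δ₁ n₁ δ₂ n₂ : ℕ} (h : (δ₁ * n₁).Coprime (δ₂ * n₂)) :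
    Fdelta k (δ₁ * δ₂) (n₁ * n₂) = Fdelta k δ₁ n₁ * Fdelta k δ₂ n₂ := by
  have hn : n₁.Coprime n₂ := h.coprime_mul_left.coprime_mul_left_right
  rw [Fdelta, hn.sum_divisorsAntidiagonal_mul (fun a b ↦ (dk k (δ₁ * δ₂ * a) : ℤ) * mupow k b),
    Fdelta, Fdelta, sum_mul_sum]
  refine sum_congr rfl fun a ha ↦ sum_congr rfl fun b hb ↦ ?_
  obtain ⟨ha, -⟩ := Nat.mem_divisorsAntidiagonal.mp ha
  obtain ⟨hb, -⟩ := Nat.mem_divisorsAntidiagonal.mp hb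
  have hδa : (δ₁ * a.1).Coprime (δ₂ * b.1) :=
    (h.coprime_dvd_left (mul_dvd_mul_left δ₁ (Dvd.intro _ ha))).coprime_dvd_right
      (mul_dvd_mul_left δ₂ (Dvd.intro _ hb))
  have hab : a.2.Coprime b.2 :=
    (hn.coprime_dvd_left (Dvd.intro_left _ ha)).coprime_dvd_right (Dvd.intro_left _ hb)
  rw [show δ₁ * δ₂ * (a.1 * b.1) = δ₁ * a.1 * (δ₂ * b.1) by ring, dk, mupow,
    isMultiplicative_zeta.pow.map_mul_of_coprime hδa,
    isMultiplicative_moebius.pow.map_mul_of_coprime hab]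
  push_cast
  ring

theorem Fdelta_one_one (k : ℕ) : Fdelta k 1 1 = 1 := by
  simp [Fdelta, dk, mupow, isMultiplicative_zeta.pow.map_one, isMultiplicative_moebius.pow.map_one]

theorem Fdelta_prod {ι : Type*} (k : ℕ) (s : Finset ι) (δ n : ι → ℕ)
    (hs : (s : Set ι).Pairwise (Nat.Coprime on fun i ↦ δ i * n i)) :
    Fdelta k (∏ i ∈ s, δ i) (∏ i ∈ s, n i) = ∏ i ∈ s, Fdelta k (δ i) (n i) := by
  classical
  induction s using Finset.induction_on with
  | empty => simp [Fdelta_one_one]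
  | insert a s ha ih =>
    rw [coe_insert, Set.pairwise_insert] at hs
    rw [prod_insert ha, prod_insert ha, prod_insert ha, Fdelta_mul _ ?_, ih hs.1]
    rw [← prod_mul_distrib]
    exact Nat.Coprime.prod_right fun i hi ↦ (hs.2 i hi (ne_of_mem_of_not_mem hi ha).symm).1

theorem stmt6 (k r : ℕ) (p : Fin r → ℕ) (hp : ∀ i, (p i).Prime)
    (hinj : Function.Injective p) (d n : Fin r → ℕ) :
    Fdelta k (∏ i, p i ^ d i) (∏ i, p i ^ n i)
      = ∏ i, Fdelta k (p i ^ d i) (p i ^ n i) := by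
  refine Fdelta_prod k univ _ _ fun i _ j _ hij ↦ ?_
  simp only [onFun, ← pow_add]
  exact Nat.coprime_pow_primes _ _ (hp i) (hp j) (hinj.ne hij)
end
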